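/- Double-exponential decay of codebooks with few unique codewords (Lemma 10): Let X be a finite alphabet. For every R̃ > 0 and ε > 0 there exist c > 0 and N₀ ∈ ℕ such that for all n ≥ N₀ and every n-type Q on X with H(Q) ≥ R̃ + ε the following holds: if N = ⌈exp(nR̃)⌉ and C is an N-tuple drawn uniformly from T_n(Q)^N, then the probability that C has at most N/2 distinct entries is at most exp(−c·exp(nR̃)). -/

import Mathlib

open scoped BigOperators Classical

noncomputable section

/-- A probability mass function on a finite alphabet. -/
def IsPMF {X : Type*} [Fintype X] (p : X → ℝ) : Prop :=
  (∀ a, 0 ≤ p a) ∧ ∑ a, p a = 1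

/-- A (discrete memoryless) channel from `X` to `Y`: every row is a pmf. -/
def IsChannel {X Y : Type*} [Fintype X] [Fintype Y] (W : X → Y → ℝ) : Prop :=
  ∀ x, IsPMF (W x)

/-- Empirical distribution (type) of a sequence `x : Fin n → X`. -/
def empDist {X : Type*} [Fintype X] {n : ℕ} (x : Fin n → X) (a : X) : ℝ :=
  ((Finset.univ.filter fun t => x t = a).card : ℝ) / n

/-- `P` is an `n`-type on `X`: a pmf all of whose masses are multiples of `1/n`. -/
def IsNType {X : Type*} [Fintype X] (n : ℕ) (P : X → ℝ) : Prop :=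
  IsPMF P ∧ ∀ a, ∃ k : ℕ, (n : ℝ) * P a = k

/-- The type class `T_n(P)`: all sequences with empirical distribution `P`. -/
def typeClass {X : Type*} [Fintype X] (n : ℕ) (P : X → ℝ) : Finset (Fin n → X) :=
  Finset.univ.filter fun x => empDist x = P

/-- Shannon entropy (natural logarithm). -/
def shEntropy {X : Type*} [Fintype X] (p : X → ℝ) : ℝ :=
  ∑ a, Real.negMulLog (p a)

/-- Kullback–Leibler divergence (real-valued, with the usual `log` conventions). -/
def dKL {X : Type*} [Fintype X] (q p : X → ℝ) : ℝ :=
  ∑ a, q a * Real.log (q a / p a)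

/-- Conditional KL divergence `D(V‖W|P)`. -/
def condDKL {X Y : Type*} [Fintype X] [Fintype Y] (V W : X → Y → ℝ) (P : X → ℝ) : ℝ :=
  ∑ x, P x * dKL (V x) (W x)

def margFst {X Y : Type*} [Fintype X] [Fintype Y] (Q : X × Y → ℝ) (x : X) : ℝ :=
  ∑ y, Q (x, y)

def margSnd {X Y : Type*} [Fintype X] [Fintype Y] (Q : X × Y → ℝ) (y : Y) : ℝ :=
  ∑ x, Q (x, y)

/-- Mutual information of a joint pmf (natural logarithm). -/
def mutualInfo {X Y : Type*} [Fintype X] [Fintype Y] (Q : X × Y → ℝ) : ℝ :=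
  ∑ x, ∑ y, Q (x, y) * Real.log (Q (x, y) / (margFst Q x * margSnd Q y))

/-- Mutual information `I(P, V)` of the joint pmf `P(x)·V(y|x)`. -/
def miPV {X Y : Type*} [Fintype X] [Fintype Y] (P : X → ℝ) (V : X → Y → ℝ) : ℝ :=
  mutualInfo fun p => P p.1 * V p.1 p.2

/-- Positive part `|a|⁺ = max (a, 0)`. -/
def plusPart (a : ℝ) : ℝ := max a 0

def margXY {X Y U : Type*} [Fintype X] [Fintype Y] [Fintype U] (Q : X × Y × U → ℝ) :
    X × Y → ℝ := fun p => ∑ u, Q (p.1, p.2, u)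

def margYU {X Y U : Type*} [Fintype X] [Fintype Y] [Fintype U] (Q : X × Y × U → ℝ) :
    Y × U → ℝ := fun p => ∑ x, Q (x, p.1, p.2)

def margXU {X Y U : Type*} [Fintype X] [Fintype Y] [Fintype U] (Q : X × Y × U → ℝ) :
    X × U → ℝ := fun p => ∑ y, Q (p.1, y, p.2)

def margX3 {X Y U : Type*} [Fintype X] [Fintype Y] [Fintype U] (Q : X × Y × U → ℝ)
    (x : X) : ℝ := ∑ y, ∑ u, Q (x, y, u)

def margY3 {X Y U : Type*} [Fintype X] [Fintype Y] [Fintype U] (Q : X × Y × U → ℝ)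
    (y : Y) : ℝ := ∑ x, ∑ u, Q (x, y, u)

/-- Conditional mutual information `I_Q(X;U|Y)` of a joint pmf `Q` on `X × Y × U`. -/
def condMI3 {X Y U : Type*} [Fintype X] [Fintype Y] [Fintype U] (Q : X × Y × U → ℝ) : ℝ :=
  ∑ x, ∑ y, ∑ u, Q (x, y, u) *
    Real.log (Q (x, y, u) * margY3 Q y / (margXY Q (x, y) * margYU Q (y, u)))

/-- `D(Q_{Y|X} ‖ W | P)` written via the joint pmf `Q_{XY}` (whose `X`-marginal is `P`). -/
def condDKLJoint {X Y : Type*} [Fintype X] [Fintype Y] (QXY : X × Y → ℝ)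
    (W : X → Y → ℝ) (P : X → ℝ) : ℝ :=
  ∑ x, ∑ y, QXY (x, y) * Real.log (QXY (x, y) / (P x * W x y))

/-- Number of messages `M_n = ⌈exp (n R)⌉`. -/
def Mn (R : ℝ) (n : ℕ) : ℕ := ⌈Real.exp (n * R)⌉₊

/-- All codebooks of `M` codewords, each of constant composition `P`. -/
def ccCodebooks {X : Type*} [Fintype X] (n M : ℕ) (P : X → ℝ) :
    Finset (Fin M → Fin n → X) :=
  Finset.univ.filter fun C => ∀ m, C m ∈ typeClass n P

/-- Ensemble-average decoding error probability of an `(n,R,B)`-code for the IB channel: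
the expectation, over a codebook drawn uniformly from the constant composition ensemble of
type `P`, of the average over messages `m` of the probability (under the memoryless channel
`W`) that the decoder output differs from `m` when codeword `C m` is sent. -/
def avgError {X Y L : Type*} [Fintype X] [Fintype Y] (W : X → Y → ℝ) (n M : ℕ)
    (P : X → ℝ) (φ : (Fin n → Y) → L) (ψ : L → (Fin M → Fin n → X) → Fin M) : ℝ :=
  (∑ C ∈ ccCodebooks n M P, (M : ℝ)⁻¹ * ∑ m : Fin M, ∑ y : Fin n → Y,
      if ψ (φ y) C = m then 0 else ∏ t, W (C m t) (y t)) /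
    ((ccCodebooks n M P).card : ℝ)

/-!
Let `s = ⌊N/2⌋`. A codebook with at most `s` distinct entries takes all its values in some
`s`-subset of the type class `T`, so there are at most `C(|T|, s) s^N ≤ e^s |T|^s s^(N-s)` of them,
and the probability in question is at most `e^s (s/|T|)^(N-s)`. Permuting a fixed sequence of
type `Q` and counting stabilisers (orbit–stabiliser), together with Stirling's bounds, gives
`|T| ≥ exp(n H(Q)) / (e(n+1))^|X|`. Since `s ≤ exp(n R̃)` and `H(Q) ≥ R̃ + ε`, the factor
`exp(n ε)` eventually beats the polynomial loss, so `s/|T| ≤ e⁻³` and the probability is at most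
`e^(s - 3(N - s)) ≤ e^(-N)`.
-/

open Finset Real Filter
open scoped Nat

theorem factorial_le_exp_one_mul_sqrt_mul_pow {k : ℕ} (hk : k ≠ 0) :
    (k ! : ℝ) ≤ exp 1 * √k * (k / exp 1) ^ k := by
  obtain ⟨m, rfl⟩ := Nat.exists_eq_succ_of_ne_zero hk
  have h := Stirling.stirlingSeq'_antitone (Nat.zero_le m)
  simp only [Function.comp_apply, Nat.succ_eq_add_one, zero_add, Stirling.stirlingSeq_one] at h
  rw [Stirling.stirlingSeq, div_le_iff₀ (by positivity)] at h
  refine h.trans_eq ?_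
  rw [Real.sqrt_mul zero_le_two]
  field_simp

theorem pow_self_le_factorial_mul_exp_one_pow (n : ℕ) : (n : ℝ) ^ n ≤ n ! * exp 1 ^ n := by
  have h := (div_le_iff₀ (by positivity)).1 (pow_div_factorial_le_exp (n : ℝ) n.cast_nonneg n)
  rwa [← exp_nat_mul, mul_one, mul_comm]

theorem factorial_mul_exp_one_pow_le (k : ℕ) : (k ! : ℝ) * exp 1 ^ k ≤ exp 1 * (k + 1) * k ^ k := by
  rcases eq_or_ne k 0 with rfl | hk
  · simp [one_le_exp zero_le_one]
  calc (k ! : ℝ) * exp 1 ^ k ≤ exp 1 * √k * (k / exp 1) ^ k * exp 1 ^ k := by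
        gcongr; exact factorial_le_exp_one_mul_sqrt_mul_pow hk
    _ = exp 1 * √k * k ^ k := by rw [div_pow]; field_simp
    _ ≤ exp 1 * (k + 1) * k ^ k := by
        gcongr
        nlinarith [Real.sq_sqrt k.cast_nonneg, Real.sqrt_nonneg k]

theorem factorial_le_card_mul_prod_factorial {α ι : Type*} [Fintype α] [DecidableEq α]
    [Fintype ι] [DecidableEq ι] (x : α → ι) (s : Finset (α → ι))
    (hs : ∀ σ : Equiv.Perm α, x ∘ σ ∈ s) :
    (Fintype.card α)! ≤ #s * ∏ i, (Fintype.card {a // x a = i})! := by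
  let G := (Equiv.Perm α)ᵈᵐᵃ
  have hstab : Nat.card (MulAction.stabilizer G x) = ∏ i, (Fintype.card {a // x a = i})! := by
    rw [← DomMulAct.stabilizer_card x, ← Nat.card_eq_fintype_card]
    exact Nat.card_congr (Equiv.subtypeEquiv DomMulAct.mk.symm fun _ ↦ DomMulAct.mem_stabilizer_iff)
  have horbit : MulAction.orbit G x ⊆ s := by
    rintro _ ⟨g, rfl⟩
    exact hs (DomMulAct.mk.symm g)
  calc (Fintype.card α)! = Nat.card G := by
        rw [Nat.card_congr DomMulAct.mk.symm, Nat.card_eq_fintype_card, Fintype.card_perm]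
    _ = (MulAction.orbit G x).ncard * Nat.card (MulAction.stabilizer G x) := by
        rw [← MulAction.index_stabilizer, ← Subgroup.card_mul_index, mul_comm]
    _ ≤ #s * ∏ i, (Fintype.card {a // x a = i})! := by
        rw [hstab]
        gcongr
        simpa using Set.ncard_le_ncard horbit s.finite_toSet

section TypeClass

variable {X : Type*} [Fintype X]

theorem empDist_comp_perm {n : ℕ} (x : Fin n → X) (σ : Equiv.Perm (Fin n)) :
    empDist (x ∘ σ) = empDist x := by
  funext a
  simp only [empDist, ← Fintype.card_subtype, Function.comp_apply]
  congr 2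
  exact Fintype.card_congr (σ.subtypeEquiv fun _ ↦ Iff.rfl)

theorem exists_card_fiber_eq {n : ℕ} (k : X → ℕ) (hk : ∑ a, k a = n) :
    ∃ x : Fin n → X, ∀ a, Fintype.card {t // x t = a} = k a := by
  subst hk
  let e : Fin (∑ a, k a) ≃ Σ a, Fin (k a) := Fintype.equivOfCardEq (by simp)
  refine ⟨fun t ↦ (e t).1, fun a ↦ ?_⟩
  rw [Fintype.card_congr ((e.subtypeEquiv fun _ ↦ Iff.rfl).trans (Equiv.sigmaSubtype a)),
    Fintype.card_fin]

theorem IsNType.exists_counts {n : ℕ} {Q : X → ℝ} (hQ : IsNType n Q) :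
    ∃ k : X → ℕ, (∀ a, (n : ℝ) * Q a = k a) ∧ ∑ a, k a = n := by
  choose k hk using hQ.2
  refine ⟨k, hk, ?_⟩
  exact_mod_cast (show ((∑ a, k a : ℕ) : ℝ) = n by
    push_cast; simp only [← hk, ← Finset.mul_sum, hQ.1.2, mul_one])

theorem mem_typeClass_of_card_fiber {n : ℕ} (hn : 0 < n) {Q : X → ℝ} {k : X → ℕ}
    (hk : ∀ a, (n : ℝ) * Q a = k a) {x : Fin n → X}
    (hx : ∀ a, Fintype.card {t // x t = a} = k a) : x ∈ typeClass n Q := by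
  simp only [typeClass, mem_filter, mem_univ, true_and]
  funext a
  rw [empDist, ← Fintype.card_subtype, hx, ← hk]
  field_simp

theorem exp_mul_shEntropy_mul_prod_pow {n : ℕ} (hn : 0 < n) {Q : X → ℝ} (k : X → ℕ)
    (hk : ∀ a, (n : ℝ) * Q a = k a) :
    exp (n * shEntropy Q) * ∏ a, (k a : ℝ) ^ k a = (n : ℝ) ^ ∑ a, k a := by
  have hn' : (n : ℝ) ≠ 0 := by positivity
  have hterm : ∀ a, exp (n * negMulLog (Q a)) * (k a : ℝ) ^ k a = (n : ℝ) ^ k a := by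
    intro a
    have hQa : Q a = k a / n := by rw [← hk a]; field_simp
    rcases eq_or_ne (k a) 0 with h | h
    · simp [hQa, h]
    have hka : (k a : ℝ) ≠ 0 := by exact_mod_cast h
    have hlog : (n : ℝ) * negMulLog (Q a) = k a * Real.log n - k a * Real.log (k a) := by
      rw [hQa, negMulLog, Real.log_div hka hn']
      field_simp
      ring
    rw [hlog, exp_sub, exp_nat_mul, exp_nat_mul, exp_log (by positivity), exp_log (by positivity)]
    field_simp
  rw [shEntropy, Finset.mul_sum, exp_sum, ← Finset.prod_mul_distrib, ← Finset.prod_pow_eq_pow_sum]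
  exact Finset.prod_congr rfl fun a _ ↦ hterm a

theorem exp_mul_shEntropy_le_card_typeClass {n : ℕ} (hn : 0 < n) {Q : X → ℝ} (hQ : IsNType n Q) :
    exp (n * shEntropy Q) ≤ #(typeClass n Q) * (exp 1 * (n + 1)) ^ Fintype.card X := by
  obtain ⟨k, hk, hsum⟩ := hQ.exists_counts
  obtain ⟨x, hx⟩ := exists_card_fiber_eq k hsum
  have hxT : ∀ σ : Equiv.Perm (Fin n), x ∘ σ ∈ typeClass n Q := fun σ ↦ by
    simpa [typeClass, empDist_comp_perm] using mem_typeClass_of_card_fiber hn hk hx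
  have hcount := factorial_le_card_mul_prod_factorial x _ hxT
  simp only [hx, Fintype.card_fin] at hcount
  have hkn : ∀ a, k a ≤ n := fun a ↦
    hsum ▸ Finset.single_le_sum (fun a _ ↦ Nat.zero_le (k a)) (mem_univ a)
  have hprod : 0 < ∏ a, (k a : ℝ) ^ k a := Finset.prod_pos fun a _ ↦ by
    rcases eq_or_ne (k a) 0 with h | h
    · simp [h]
    · positivity
  refine le_of_mul_le_mul_right ?_ hprod
  calc exp (n * shEntropy Q) * ∏ a, (k a : ℝ) ^ k a = (n : ℝ) ^ n := by
        rw [exp_mul_shEntropy_mul_prod_pow hn k hk, hsum]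
    _ ≤ n ! * exp 1 ^ n := pow_self_le_factorial_mul_exp_one_pow n
    _ ≤ #(typeClass n Q) * ∏ a, ((k a)! * exp 1 ^ k a) := by
        rw [Finset.prod_mul_distrib, Finset.prod_pow_eq_pow_sum, hsum, ← mul_assoc]
        gcongr
        exact_mod_cast hcount
    _ ≤ #(typeClass n Q) * ∏ a, (exp 1 * (n + 1) * (k a : ℝ) ^ k a) := by
        refine mul_le_mul_of_nonneg_left ?_ (by positivity)
        refine Finset.prod_le_prod (fun a _ ↦ by positivity) fun a _ ↦ ?_
        exact (factorial_mul_exp_one_pow_le (k a)).trans (by gcongr; exact hkn a)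
    _ = #(typeClass n Q) * (exp 1 * (n + 1)) ^ Fintype.card X * ∏ a, (k a : ℝ) ^ k a := by
        rw [Finset.prod_mul_distrib, Finset.prod_const, Finset.card_univ, mul_assoc]

theorem exp_mul_le_exp_neg_three_mul_card_typeClass {n : ℕ} (hn : 0 < n) {Q : X → ℝ}
    (hQ : IsNType n Q) {R ε : ℝ} (hH : R + ε ≤ shEntropy Q)
    (hpoly : exp 3 * exp 1 ^ Fintype.card X * ((n : ℝ) + 1) ^ Fintype.card X ≤ exp (n * ε)) :
    exp (n * R) ≤ exp (-3) * #(typeClass n Q) := by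
  have hT := exp_mul_shEntropy_le_card_typeClass hn hQ
  rw [exp_neg, ← div_eq_inv_mul, le_div_iff₀' (exp_pos 3)]
  refine le_of_mul_le_mul_right ?_ (by positivity : (0 : ℝ) < (exp 1 * (n + 1)) ^ Fintype.card X)
  calc exp 3 * exp (n * R) * (exp 1 * (n + 1)) ^ Fintype.card X
      = exp (n * R) * (exp 3 * (exp 1 * (n + 1)) ^ Fintype.card X) := by ring
    _ ≤ exp (n * R) * exp (n * ε) := by rw [mul_pow, ← mul_assoc (exp 3)]; gcongr
    _ ≤ exp (n * shEntropy Q) := by rw [← exp_add, ← mul_add]; gcongr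
    _ ≤ _ := hT

theorem ccCodebooks_eq_piFinset (n M : ℕ) (P : X → ℝ) :
    ccCodebooks n M P = Fintype.piFinset fun _ ↦ typeClass n P := by
  ext C
  simp [ccCodebooks, Fintype.mem_piFinset]

end TypeClass

theorem card_filter_card_image_le {α : Type*} [DecidableEq α] (T : Finset α) (M : ℕ) {s : ℕ}
    (hs : s ≤ #T) :
    #((Fintype.piFinset fun _ : Fin M ↦ T).filter fun C ↦ #(univ.image C) ≤ s)
      ≤ (#T).choose s * s ^ M := by
  calc _ ≤ #((T.powersetCard s).biUnion fun S ↦ Fintype.piFinset fun _ : Fin M ↦ S) := by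
        refine card_le_card fun C hC ↦ ?_
        obtain ⟨hCT, hCs⟩ := mem_filter.1 hC
        have himage : univ.image C ⊆ T := by
          simpa [image_subset_iff] using Fintype.mem_piFinset.1 hCT
        obtain ⟨S, hCS, hST, hScard⟩ := exists_subsuperset_card_eq himage hCs hs
        refine mem_biUnion.2 ⟨S, mem_powersetCard.2 ⟨hST, hScard⟩, ?_⟩
        exact Fintype.mem_piFinset.2 fun m ↦ hCS (mem_image_of_mem C (mem_univ m))
    _ ≤ ∑ S ∈ T.powersetCard s, #(Fintype.piFinset fun _ : Fin M ↦ S) := card_biUnion_le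
    _ = (#T).choose s * s ^ M := by
        rw [sum_congr rfl fun S hS ↦ by
          rw [Fintype.card_piFinset_const, (mem_powersetCard.1 hS).2], sum_const,
          card_powersetCard, smul_eq_mul]

theorem choose_mul_pow_le (t : ℕ) {s M : ℕ} (hsM : s ≤ M) :
    (t.choose s : ℝ) * s ^ M ≤ exp s * t ^ s * s ^ (M - s) := by
  have hpow : (s : ℝ) ^ s ≤ s ! * exp s :=
    (div_le_iff₀' (by positivity)).1 (pow_div_factorial_le_exp (s : ℝ) s.cast_nonneg s)
  calc (t.choose s : ℝ) * s ^ M = t.choose s * s ^ s * s ^ (M - s) := by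
        rw [mul_assoc, ← pow_add, Nat.add_sub_cancel' hsM]
    _ ≤ t ^ s / s ! * (s ! * exp s) * s ^ (M - s) := by
        gcongr
        exact Nat.choose_le_pow_div s t
    _ = exp s * t ^ s * s ^ (M - s) := by
        field_simp

theorem card_filter_card_image_le_half {α : Type*} [DecidableEq α] (T : Finset α) (M : ℕ)
    (hT : ((M / 2 : ℕ) : ℝ) ≤ exp (-3) * #T) :
    (#((Fintype.piFinset fun _ : Fin M ↦ T).filter fun C ↦ #(univ.image C) ≤ M / 2) : ℝ)
      ≤ exp (-M) * #T ^ M := by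
  set s := M / 2
  have hsM : s ≤ M := Nat.div_le_self M 2
  have hst : s ≤ #T := by
    exact_mod_cast hT.trans (mul_le_of_le_one_left (by positivity) (exp_le_one_iff.2 (by norm_num)))
  have hcount : (#((Fintype.piFinset fun _ : Fin M ↦ T).filter fun C ↦ #(univ.image C) ≤ s) : ℝ)
      ≤ (#T).choose s * s ^ M := by
    exact_mod_cast card_filter_card_image_le T M hst
  refine hcount.trans <| (choose_mul_pow_le _ hsM).trans ?_
  calc exp s * #T ^ s * s ^ (M - s) ≤ exp s * #T ^ s * (exp (-3) * #T) ^ (M - s) := by gcongr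
    _ = exp s * exp (-3) ^ (M - s) * (#T ^ s * #T ^ (M - s)) := by ring
    _ = exp (s - 3 * (M - s : ℕ)) * #T ^ M := by
        rw [← pow_add, Nat.add_sub_cancel' hsM, ← exp_nat_mul, ← exp_add]
        ring_nf
    _ ≤ exp (-M) * #T ^ M := by
        gcongr
        have : (2 * s : ℝ) ≤ M := by exact_mod_cast Nat.mul_div_le M 2
        push_cast [hsM]
        linarith

theorem natCast_le_div_two_iff {a M : ℕ} : (a : ℝ) ≤ M / 2 ↔ a ≤ M / 2 := by
  rw [← Nat.floor_div_eq_div (K := ℝ), Nat.le_floor_iff (by positivity)]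
  norm_cast

theorem eventually_mul_add_one_pow_le_exp (C : ℝ) (d : ℕ) {ε : ℝ} (hε : 0 < ε) :
    ∀ᶠ n : ℕ in atTop, C * ((n : ℝ) + 1) ^ d ≤ exp (n * ε) := by
  set K := max C 1 * exp ε
  have hK : 0 < K := by positivity
  have hx : ∀ᶠ x : ℝ in atTop, x ^ d ≤ K⁻¹ * exp (ε * x) := by
    filter_upwards [(isLittleO_pow_exp_pos_mul_atTop d hε).bound (inv_pos.2 hK),
      eventually_ge_atTop 0] with x hx hx0
    simpa [abs_of_nonneg hx0] using hx
  have hn := (tendsto_natCast_atTop_atTop.atTop_add tendsto_const_nhds (C := 1)).eventually hx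
  filter_upwards [hn] with n hn
  calc C * ((n : ℝ) + 1) ^ d ≤ max C 1 * ((n : ℝ) + 1) ^ d := by gcongr; exact le_max_left C 1
    _ ≤ max C 1 * (K⁻¹ * exp (ε * (n + 1))) := by gcongr
    _ = exp (n * ε) := by
        rw [mul_add, mul_one, exp_add, mul_comm ε]
        simp only [K]
        field_simp

theorem Mn_div_two_le_exp {R : ℝ} (hR : 0 ≤ R) (n : ℕ) : ((Mn R n / 2 : ℕ) : ℝ) ≤ exp (n * R) := by
  have hM : (Mn R n : ℝ) < exp (n * R) + 1 := Nat.ceil_lt_add_one (exp_pos _).le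
  have h1 : 1 ≤ exp (n * R) := one_le_exp (by positivity)
  have h2 : ((Mn R n / 2 : ℕ) : ℝ) * 2 ≤ Mn R n := by exact_mod_cast Nat.div_mul_le_self _ 2
  linarith

theorem few_unique_codewords_double_exponential_general
    {X : Type*} [Fintype X] :
    ∀ Rt ε : ℝ, 0 < Rt → 0 < ε → ∃ c : ℝ, 0 < c ∧ ∃ N₀ : ℕ, ∀ n ≥ N₀, ∀ Q : X → ℝ,
      IsNType n Q → Rt + ε ≤ shEntropy Q →
      (((ccCodebooks n (Mn Rt n) Q).filter fun C =>
          ((Finset.univ.image C).card : ℝ) ≤ (Mn Rt n : ℝ) / 2).card : ℝ) /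
        ((ccCodebooks n (Mn Rt n) Q).card : ℝ)
        ≤ Real.exp (-c * Real.exp (n * Rt)) := by
  intro Rt ε hRt hε
  obtain ⟨N₀, hN₀⟩ := ((eventually_mul_add_one_pow_le_exp (exp 3 * exp 1 ^ Fintype.card X)
    (Fintype.card X) hε).and (eventually_gt_atTop 0)).exists_forall_of_atTop
  refine ⟨1, one_pos, N₀, fun n hn Q hQ hH ↦ ?_⟩
  obtain ⟨hpoly, hn⟩ := hN₀ n hn
  have hT := exp_mul_le_exp_neg_three_mul_card_typeClass hn hQ hH hpoly
  have hTpos : (0 : ℝ) < #(typeClass n Q) :=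
    pos_of_mul_pos_right ((exp_pos _).trans_le hT) (exp_pos _).le
  simp only [natCast_le_div_two_iff, ccCodebooks_eq_piFinset, Fintype.card_piFinset_const]
  rw [Nat.cast_pow, div_le_iff₀ (by positivity)]
  calc _ ≤ exp (-(Mn Rt n : ℝ)) * #(typeClass n Q) ^ Mn Rt n :=
        card_filter_card_image_le_half _ _ ((Mn_div_two_le_exp hRt.le n).trans hT)
    _ ≤ exp (-1 * exp (n * Rt)) * #(typeClass n Q) ^ Mn Rt n := by
        gcongr
        rw [neg_one_mul, neg_le_neg_iff]
        exact Nat.le_ceil _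

/-- **Lemma 10** (double-exponential decay of codebooks with few unique codewords): for
every `R̃ > 0` and `ε > 0` there are `c > 0` and `N₀` such that for all `n ≥ N₀` and every
`n`-type `Q` with `H(Q) ≥ R̃ + ε`, a codebook `C` drawn uniformly from `T_n(Q)^N` with
`N = ⌈exp (n R̃)⌉` has at most `N/2` distinct entries with probability at most
`exp (−c·exp (n R̃))`. -/
theorem few_unique_codewords_double_exponential
    {X : Type*} [Fintype X] [Nonempty X] :
    ∀ Rt ε : ℝ, 0 < Rt → 0 < ε → ∃ c : ℝ, 0 < c ∧ ∃ N₀ : ℕ, ∀ n ≥ N₀, ∀ Q : X → ℝ,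
      IsNType n Q → Rt + ε ≤ shEntropy Q →
      (((ccCodebooks n (Mn Rt n) Q).filter fun C =>
          ((Finset.univ.image C).card : ℝ) ≤ (Mn Rt n : ℝ) / 2).card : ℝ) /
        ((ccCodebooks n (Mn Rt n) Q).card : ℝ)
        ≤ Real.exp (-c * Real.exp (n * Rt)) :=
  few_unique_codewords_double_exponential_general

end
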